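/- Let (X,f) be a TDS having the uniform separation property and whose ergodic measures are entropy dense, and let φ: X → ℝ be continuous. For any η > 0 there exist δ* > 0 and ε* > 0 such that for every invariant μ ∈ M(X,f) and every sufficiently small neighborhood F ⊂ M(X) of μ there exists n*_{F,μ,η} ∈ ℕ such that for every n ≥ n*_{F,μ,η} there exists a (δ*,n,ε*)-separated set Γ_n ⊂ X_{n,F} with Σ_{x∈Γ_n} e^{S_nφ(x)} ≥ exp[n(h_μ(f) + ∫φ dμ − η)]. -/

import Mathlib

open MeasureTheory Filter Set
open scoped ENNReal NNReal

namespace Paper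

variable {X : Type*}

/-- Birkhoff sum `S_n φ(x) = ∑_{i<n} φ(f^i x)`. -/
def birk (f : X → X) (φ : X → ℝ) (n : ℕ) (x : X) : ℝ :=
  ∑ i ∈ Finset.range n, φ (f^[i] x)

section Metric

variable [MetricSpace X]

/-- The Bowen ball `B_n(x, ε) = {y : d_n(x,y) < ε}`. -/
def bowenBall (f : X → X) (x : X) (n : ℕ) (ε : ℝ) : Set X :=
  {y | ∀ i < n, dist (f^[i] x) (f^[i] y) < ε}

/-- The number of indices `0 ≤ j ≤ n-1` with `dist (f^j x, f^j y) > ε`. -/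
noncomputable def sepCount (f : X → X) (ε : ℝ) (n : ℕ) (x y : X) : ℕ :=
  Nat.card {j : ℕ // j < n ∧ ε < dist (f^[j] x) (f^[j] y)}

/-- `A` is an `(n,ε)`-separated set. -/
def IsNSep (f : X → X) (n : ℕ) (ε : ℝ) (A : Set X) : Prop :=
  ∀ x ∈ A, ∀ y ∈ A, x ≠ y → ∃ j < n, ε < dist (f^[j] x) (f^[j] y)

/-- `A` is a `(δ,n,ε)`-separated set. -/
def IsDeltaSep (f : X → X) (δ : ℝ) (n : ℕ) (ε : ℝ) (A : Set X) : Prop :=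
  ∀ x ∈ A, ∀ y ∈ A, x ≠ y → δ * n ≤ (sepCount f ε n x y : ℝ)

end Metric

section Entropy

variable [MeasurableSpace X]

/-- A finite measurable partition of `X`. -/
def IsFinPartition (s : Finset (Set X)) : Prop :=
  (∀ A ∈ s, MeasurableSet A) ∧ ⋃₀ (s : Set (Set X)) = Set.univ ∧
    (s : Set (Set X)).Pairwise Disjoint

/-- The entropy `H(μ, ⋁_{i<n} f^{-i} ξ)` of the `n`-th dynamical refinement of the
partition `s` (with the convention `0 · log 0 = 0`). -/
noncomputable def dynH (f : X → X) (μ : Measure X) (s : Finset (Set X)) (n : ℕ) : ℝ :=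
  -∑ w : Fin n → {A // A ∈ s},
      (μ (⋂ i : Fin n, f^[(i : ℕ)] ⁻¹' ((w i : Set X)))).toReal *
        Real.log (μ (⋂ i : Fin n, f^[(i : ℕ)] ⁻¹' ((w i : Set X)))).toReal

/-- The Kolmogorov–Sinai entropy `h_μ(f)`, as an extended real:
`sup_ξ lim_n H(μ, ξ^n)/n`. -/
noncomputable def ksEntropy (f : X → X) (μ : Measure X) : EReal :=
  ⨆ (s : Finset (Set X)) (_ : IsFinPartition s),
    Filter.atTop.liminf (fun n : ℕ => ((dynH f μ s n / n : ℝ) : EReal))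

end Entropy

section Empiric

variable [MeasurableSpace X]

/-- The empiric measure `E_n(x) = (1/n) ∑_{k<n} δ_{f^k x}`. -/
noncomputable def empiric (f : X → X) (x : X) (n : ℕ) : Measure X :=
  (n : ℝ≥0∞)⁻¹ • ∑ k ∈ Finset.range n, Measure.dirac (f^[k] x)

end Empiric

section WeakStar

variable [MeasurableSpace X] [TopologicalSpace X] [OpensMeasurableSpace X]

/-- The set `X_{n,F}` of points whose `n`-th empiric measure lies in `F ⊆ M(X)`
(where `M(X)`, the space of Borel probability measures, carries the weak-star topology). -/
def Xnf (f : X → X) (n : ℕ) (F : Set (ProbabilityMeasure X)) : Set X :=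
  {x | ∃ h : IsProbabilityMeasure (empiric f x n),
        (⟨empiric f x n, h⟩ : ProbabilityMeasure X) ∈ F}

end WeakStar

section UniformSep

variable [MetricSpace X] [MeasurableSpace X] [OpensMeasurableSpace X]

/-- `N(F;δ,n,ε)`: the maximal cardinality of a `(δ,n,ε)`-separated subset of `X_{n,F}`. -/
noncomputable def Nsep (f : X → X) (F : Set (ProbabilityMeasure X))
    (δ : ℝ) (n : ℕ) (ε : ℝ) : ℕ :=
  sSup {k : ℕ | ∃ E : Finset X, ↑E ⊆ Xnf f n F ∧ IsDeltaSep f δ n ε ↑E ∧ E.card = k}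

/-- The uniform separation property: for every `η > 0` there are `δ* > 0`, `ε* > 0`
such that for each ergodic `μ`, each real `h ≤ h_μ(f)` and each neighborhood `F` of `μ`,
eventually `N(F;δ*,n,ε*) ≥ e^{n(h-η)}`. -/
def UniformSeparation (f : X → X) : Prop :=
  ∀ η : ℝ, 0 < η → ∃ δs > (0 : ℝ), ∃ εs > (0 : ℝ),
    ∀ (μ : Measure X) (hp : IsProbabilityMeasure μ), Ergodic f μ →
      ∀ h : ℝ, (h : EReal) ≤ ksEntropy f μ →
        ∀ F ∈ nhds (X := ProbabilityMeasure X) ⟨μ, hp⟩,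
          ∃ nstar : ℕ, ∀ n : ℕ, nstar ≤ n →
            Real.exp ((n : ℝ) * (h - η)) ≤ (Nsep f F δs n εs : ℝ)

/-- The ergodic measures of `(X,f)` are entropy dense. -/
def EntropyDense (f : X → X) : Prop :=
  ∀ (μ : Measure X) (hp : IsProbabilityMeasure μ), MeasurePreserving f μ μ →
    ∀ F ∈ nhds (X := ProbabilityMeasure X) ⟨μ, hp⟩,
      ∀ hstar : ℝ, (hstar : EReal) < ksEntropy f μ →
        ∃ ν : ProbabilityMeasure X, ν ∈ F ∧ Ergodic f ν.toMeasure ∧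
          (hstar : EReal) < ksEntropy f ν.toMeasure

end UniformSep

end Paper

open Paper

/-!
By entropy density, `μ` is approximated inside `interior F` by an ergodic `ν` with
`h_ν(f) > h - η/3`; uniform separation for `ν` yields at least `e^{n(h - 2η/3)}`
`(δ*,n,ε*)`-separated points in `X_{n,F}`. Choosing `F₀ = {ν | ∫φ dν > ∫φ dμ - η/3}`, which is
open because `X` is compact, every such point has `S_nφ(x) = n ∫φ dE_n(x) ≥ n(∫φ dμ - η/3)`.
-/

namespace Paper

variable {X : Type*}

lemma integral_empiric [MeasurableSpace X] (f : X → X) {φ : X → ℝ} (hφ : StronglyMeasurable φ)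
    (x : X) (n : ℕ) : ∫ y, φ y ∂(empiric f x n) = (n : ℝ)⁻¹ * birk f φ n x := by
  have hint : ∀ k ∈ Finset.range n, Integrable φ (Measure.dirac (f^[k] x)) :=
    fun k _ => integrable_dirac' hφ enorm_lt_top
  rw [empiric, integral_smul_measure, integral_finsetSum_measure hint]
  simp [birk, integral_dirac' _ _ hφ, ENNReal.toReal_inv]

lemma mul_le_birk_of_lt_integral_empiric [MeasurableSpace X] (f : X → X) {φ : X → ℝ}
    (hφ : StronglyMeasurable φ) {x : X} {n : ℕ} {a : ℝ}
    (ha : a < ∫ y, φ y ∂(empiric f x n)) : n * a ≤ birk f φ n x := by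
  rw [integral_empiric f hφ] at ha
  rcases n.eq_zero_or_pos with rfl | hn
  · simp [birk]
  · have hn' : (0 : ℝ) < n := Nat.cast_pos.2 hn
    calc (n : ℝ) * a ≤ n * ((n : ℝ)⁻¹ * birk f φ n x) := by gcongr
      _ = birk f φ n x := by field_simp

lemma Xnf_mono [MeasurableSpace X] [TopologicalSpace X] [OpensMeasurableSpace X]
    (f : X → X) (n : ℕ) {F F' : Set (ProbabilityMeasure X)} (hFF : F ⊆ F') :
    Xnf f n F ⊆ Xnf f n F' :=
  fun _ ⟨hpx, hx⟩ => ⟨hpx, hFF hx⟩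

lemma mul_le_birk_of_mem_Xnf [MeasurableSpace X] [TopologicalSpace X] [OpensMeasurableSpace X]
    (f : X → X) {φ : X → ℝ} (hφ : StronglyMeasurable φ) {n : ℕ} {a : ℝ}
    {F : Set (ProbabilityMeasure X)} (hF : F ⊆ {ν | a < ∫ y, φ y ∂(ν : Measure X)})
    {x : X} (hx : x ∈ Xnf f n F) : n * a ≤ birk f φ n x := by
  obtain ⟨_, hxF⟩ := hx
  exact mul_le_birk_of_lt_integral_empiric f hφ (hF hxF)

lemma card_mul_exp_le_sum_exp_birk (f : X → X) (φ : X → ℝ) {n : ℕ} {a : ℝ} {Γ : Finset X}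
    (hΓ : ∀ x ∈ Γ, n * a ≤ birk f φ n x) :
    Γ.card * Real.exp (n * a) ≤ ∑ x ∈ Γ, Real.exp (birk f φ n x) := by
  simpa [nsmul_eq_mul] using
    Γ.card_nsmul_le_sum _ _ fun x hx => Real.exp_le_exp.2 (hΓ x hx)

lemma isOpen_setOf_lt_integral [MetricSpace X] [CompactSpace X] [MeasurableSpace X]
    [BorelSpace X] {φ : X → ℝ} (hφ : Continuous φ) (a : ℝ) :
    IsOpen {ν : ProbabilityMeasure X | a < ∫ y, φ y ∂(ν : Measure X)} :=
  isOpen_lt continuous_const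
    (ProbabilityMeasure.continuous_integral_continuousMap (⟨φ, hφ⟩ : C(X, ℝ)))

lemma exists_finset_le_card_of_le_Nsep [MetricSpace X] [MeasurableSpace X]
    [OpensMeasurableSpace X] {f : X → X} {F : Set (ProbabilityMeasure X)} {δ ε c : ℝ} {n : ℕ}
    (hc : c ≤ Nsep f F δ n ε) :
    ∃ E : Finset X, ↑E ⊆ Xnf f n F ∧ IsDeltaSep f δ n ε ↑E ∧ c ≤ E.card := by
  set S := {k : ℕ | ∃ E : Finset X, ↑E ⊆ Xnf f n F ∧ IsDeltaSep f δ n ε ↑E ∧ E.card = k}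
  by_cases hS : BddAbove S
  · have h0 : 0 ∈ S := ⟨∅, by simp, by simp [IsDeltaSep], rfl⟩
    obtain ⟨E, hEF, hEsep, hEcard⟩ := Nat.sSup_mem ⟨0, h0⟩ hS
    exact ⟨E, hEF, hEsep, hEcard ▸ hc⟩
  · obtain ⟨k, ⟨E, hEF, hEsep, rfl⟩, hk⟩ := not_bddAbove_iff.1 hS ⌈c⌉₊
    exact ⟨E, hEF, hEsep, (Nat.le_ceil c).trans (by exact_mod_cast hk.le)⟩

end Paper

theorem separated_set_of_invariant_general {X : Type*} [MetricSpace X] [CompactSpace X] [MeasurableSpace X] [BorelSpace X]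
    (f : X → X) (hus : UniformSeparation f) (hed : EntropyDense f)
    (φ : X → ℝ) (hφ : Continuous φ) (η : ℝ) (hη : 0 < η) :
    ∃ δs > (0 : ℝ), ∃ εs > (0 : ℝ),
      ∀ (μ : Measure X) (hp : IsProbabilityMeasure μ), MeasurePreserving f μ μ →
        ∀ h : ℝ, (h : EReal) ≤ ksEntropy f μ →
          ∃ F₀ ∈ nhds (X := MeasureTheory.ProbabilityMeasure X) ⟨μ, hp⟩,
            ∀ F ∈ nhds (X := MeasureTheory.ProbabilityMeasure X) ⟨μ, hp⟩, F ⊆ F₀ →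
              ∃ nstar : ℕ, ∀ n : ℕ, nstar ≤ n →
                ∃ Γ : Finset X, ↑Γ ⊆ Xnf f n F ∧ IsDeltaSep f δs n εs ↑Γ ∧
                  Real.exp ((n : ℝ) * (h + ∫ x, φ x ∂μ - η)) ≤
                    ∑ x ∈ Γ, Real.exp (birk f φ n x) := by
  obtain ⟨δs, hδs, εs, hεs, husep⟩ := hus (η / 3) (by positivity)
  refine ⟨δs, hδs, εs, hεs, fun μ hp hmp h hle => ?_⟩
  set a := ∫ x, φ x ∂μ - η / 3 with ha
  have haμ : a < ∫ x, φ x ∂μ := by linarith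
  refine ⟨_, (isOpen_setOf_lt_integral hφ a).mem_nhds haμ, fun F hF hFa => ?_⟩
  have hlt : ((h - η / 3 : ℝ) : EReal) < ksEntropy f μ :=
    lt_of_lt_of_le (EReal.coe_lt_coe_iff.2 (by linarith)) hle
  obtain ⟨ν, hνF, hνerg, hνent⟩ := hed μ hp hmp _ (interior_mem_nhds.2 hF) _ hlt
  obtain ⟨nstar, hN⟩ :=
    husep ν ν.2 hνerg _ hνent.le _ (isOpen_interior.mem_nhds hνF)
  refine ⟨nstar, fun n hn => ?_⟩
  obtain ⟨Γ, hΓF, hΓsep, hΓcard⟩ := exists_finset_le_card_of_le_Nsep (hN n hn)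
  have hΓF' : ↑Γ ⊆ Xnf f n F := hΓF.trans (Xnf_mono f n interior_subset)
  refine ⟨Γ, hΓF', hΓsep, ?_⟩
  have hbirk : ∀ x ∈ Γ, n * a ≤ birk f φ n x := fun x hx =>
    mul_le_birk_of_mem_Xnf f hφ.measurable.stronglyMeasurable hFa (hΓF' hx)
  calc Real.exp (n * (h + ∫ x, φ x ∂μ - η))
      = Real.exp (n * (h - η / 3 - η / 3)) * Real.exp (n * a) := by
        rw [← Real.exp_add, ha]; ring_nf
    _ ≤ Γ.card * Real.exp (n * a) := by gcongr
    _ ≤ ∑ x ∈ Γ, Real.exp (birk f φ n x) := card_mul_exp_le_sum_exp_birk f φ hbirk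

/-- Corollary 3.5: if `(X,f)` has the uniform separation property and the ergodic
measures are entropy dense, then for any `η > 0` there are `δ* > 0`, `ε* > 0` such that
for every invariant `μ` and every sufficiently small weak-star neighborhood `F` of `μ`
there is `n*` such that for all `n ≥ n*` there is a `(δ*,n,ε*)`-separated set
`Γ_n ⊆ X_{n,F}` with `∑_{x∈Γ_n} e^{S_nφ(x)} ≥ exp (n (h_μ(f) + ∫φ dμ - η))`
(stated for every real `h ≤ h_μ(f)`). -/
theorem separated_set_of_invariant {X : Type*} [MetricSpace X] [CompactSpace X] [MeasurableSpace X] [BorelSpace X]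
    (f : X → X) (hf : Continuous f) (hus : UniformSeparation f) (hed : EntropyDense f)
    (φ : X → ℝ) (hφ : Continuous φ) (η : ℝ) (hη : 0 < η) :
    ∃ δs > (0 : ℝ), ∃ εs > (0 : ℝ),
      ∀ (μ : Measure X) (hp : IsProbabilityMeasure μ), MeasurePreserving f μ μ →
        ∀ h : ℝ, (h : EReal) ≤ ksEntropy f μ →
          ∃ F₀ ∈ nhds (X := MeasureTheory.ProbabilityMeasure X) ⟨μ, hp⟩,
            ∀ F ∈ nhds (X := MeasureTheory.ProbabilityMeasure X) ⟨μ, hp⟩, F ⊆ F₀ →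
              ∃ nstar : ℕ, ∀ n : ℕ, nstar ≤ n →
                ∃ Γ : Finset X, ↑Γ ⊆ Xnf f n F ∧ IsDeltaSep f δs n εs ↑Γ ∧
                  Real.exp ((n : ℝ) * (h + ∫ x, φ x ∂μ - η)) ≤
                    ∑ x ∈ Γ, Real.exp (birk f φ n x) :=
  separated_set_of_invariant_general f hus hed φ hφ η hη
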